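/- arXiv:2502.19791 — 9 statements merged into one kernel-verified Lean document; each statement's English description precedes it below -/
import Mathlib

section
/- There is no online value-sharing rule satisfying individual rationality for online cooperative games with general (monotone, normalized) valuations. Concretely: for the game with N = {1,2}, arrival order (1,2), v({1}) = 2, v({2}) = 3, v({1,2}) = 4, any sequence of allocations that is efficient at each prefix (sum of allocations to arrived players equals value of arrived coalition), non-negative, and never decreases any player's cumulative allocation, must give some player i strictly less than v({i}). -/
theorem no_ir_rule_general_valuations_general
    (φ : Fin 2 → Fin 2 → ℝ)
    (hstay : ∀ p, φ 0 p ≤ φ 1 p)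
    (heff1 : φ 0 0 = 2)
    (heff2 : φ 1 0 + φ 1 1 = 4) :
    φ 1 0 < 2 ∨ φ 1 1 < 3 := by
  right
  calc φ 1 1 = 4 - φ 1 0 := by linarith
    _ ≤ 4 - φ 0 0 := by linarith [hstay 0]
    _ < 3 := by linarith

/-- No online value-sharing rule satisfies individual rationality for general
monotone normalized valuations: in the game with `N = {1,2}`, arrival order `(1,2)`,
`v {1} = 2`, `v {2} = 3`, `v {1,2} = 4`, any allocation scheme `φ t p`
(cumulative share of player `p` after step `t`) that is non-negative,
non-decreasing in time, efficient at each prefix, and gives nothing to players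
not yet arrived, must give some player strictly less than her singleton value. -/
theorem no_ir_rule_general_valuations
    (φ : Fin 2 → Fin 2 → ℝ)
    (hnonneg : ∀ t p, 0 ≤ φ t p)
    (hstay : ∀ p, φ 0 p ≤ φ 1 p)
    (heff1 : φ 0 0 = 2)
    (hnotarrived : φ 0 1 = 0)
    (heff2 : φ 1 0 + φ 1 1 = 4) :
    φ 1 0 < 2 ∨ φ 1 1 < 3 :=
  no_ir_rule_general_valuations_general φ hstay heff1 heff2
end

section
/- The Marginal Equal Share (MES) rule satisfies strong incentive to stay (S-STAY): each player's cumulative share is non-decreasing over time, and moreover if a newly arriving contributional player i (v(Sᵢ) > v(Sᵢ∖{i})) arrives, then every previously arrived player j with v(Sᵢ) > v(Sᵢ∖{j}) strictly increases their cumulative share at step i. -/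
variable {α : Type*} [DecidableEq α]

/-- The set of players arrived up to and including step `t`, under arrival order `π`. -/
def prefixSet {n : ℕ} (π : Fin n → α) (t : Fin n) : Finset α :=
  (Finset.Iic t).image π

/-- Amount the MES rule gives player `p` at step `t`: the marginal contribution of the
newly arrived player `π t` is split equally among all arrived players. -/
noncomputable def mesStep {n : ℕ} (v : Finset α → ℝ) (π : Fin n → α) (t : Fin n) (p : α) : ℝ :=
  if p ∈ prefixSet π t then
    (v (prefixSet π t) - v ((prefixSet π t).erase (π t))) / ((prefixSet π t).card : ℝ)
  else 0

/-- Cumulative MES share of player `p` after step `t`. -/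
noncomputable def mesCum {n : ℕ} (v : Finset α → ℝ) (π : Fin n → α) (p : α) (t : Fin n) : ℝ :=
  ∑ s ∈ Finset.Iic t, mesStep v π s p

section MES

variable {n : ℕ} {v : Finset α → ℝ} {π : Fin n → α}

theorem mem_prefixSet_of_le {s t : Fin n} (hst : s ≤ t) : π s ∈ prefixSet π t :=
  Finset.mem_image_of_mem π (Finset.mem_Iic.mpr hst)

theorem mesStep_nonneg (hv : Monotone v) (t : Fin n) (p : α) : 0 ≤ mesStep v π t p := by
  unfold mesStep
  split_ifs
  · exact div_nonneg (sub_nonneg.mpr (hv (Finset.erase_subset _ _))) (Nat.cast_nonneg _)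
  · exact le_rfl

theorem mesStep_pos {t : Fin n} {p : α} (hp : p ∈ prefixSet π t)
    (hcontrib : v ((prefixSet π t).erase (π t)) < v (prefixSet π t)) :
    0 < mesStep v π t p := by
  rw [mesStep, if_pos hp]
  exact div_pos (sub_pos.mpr hcontrib) (Nat.cast_pos.mpr (Finset.card_pos.mpr ⟨p, hp⟩))

theorem mesCum_mono (hv : Monotone v) (p : α) : Monotone (mesCum v π p) := fun _ _ hst =>
  Finset.sum_le_sum_of_subset_of_nonneg (Finset.Iic_subset_Iic.mpr hst)
    fun u _ _ => mesStep_nonneg hv u p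

theorem mesCum_lt_of_mesStep_pos (hv : Monotone v) {p : α} {s t : Fin n} (hst : s < t)
    (hpos : 0 < mesStep v π t p) : mesCum v π p s < mesCum v π p t :=
  Finset.sum_lt_sum_of_subset (Finset.Iic_subset_Iic.mpr hst.le) (Finset.mem_Iic.mpr le_rfl)
    (fun ht => hst.not_ge (Finset.mem_Iic.mp ht)) hpos fun u _ _ => mesStep_nonneg hv u p

end MES

theorem mes_sstay_general {n : ℕ} (v : Finset α → ℝ) (π : Fin n → α)
    (hmono : ∀ S T : Finset α, S ⊆ T → v S ≤ v T) :
    (∀ (p : α) (s t : Fin n), s ≤ t → mesCum v π p s ≤ mesCum v π p t) ∧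
    (∀ s t : Fin n, s < t →
      v (prefixSet π t) > v ((prefixSet π t).erase (π t)) →
      v (prefixSet π t) > v ((prefixSet π t).erase (π s)) →
      mesCum v π (π s) t > mesCum v π (π s) s) := by
  have hv : Monotone v := fun S T hST => hmono S T hST
  refine ⟨fun p s t hst => mesCum_mono hv p hst, fun s t hst hcontrib _ => ?_⟩
  exact mesCum_lt_of_mesStep_pos hv hst (mesStep_pos (mem_prefixSet_of_le hst.le) hcontrib)

/-- The MES rule satisfies S-STAY: cumulative shares are non-decreasing over time, and
when a contributional player `π t` arrives, every previously arrived player `π s`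
with `v (prefixSet π t) > v (prefixSet π t \ {π s})` strictly increases her cumulative
share between her own arrival step `s` and step `t`. -/
theorem mes_sstay {n : ℕ} (v : Finset α → ℝ) (π : Fin n → α)
    (hinj : Function.Injective π)
    (hnorm : v ∅ = 0)
    (hmono : ∀ S T : Finset α, S ⊆ T → v S ≤ v T) :
    (∀ (p : α) (s t : Fin n), s ≤ t → mesCum v π p s ≤ mesCum v π p t) ∧
    (∀ s t : Fin n, s < t →
      v (prefixSet π t) > v ((prefixSet π t).erase (π t)) →
      v (prefixSet π t) > v ((prefixSet π t).erase (π s)) →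
      mesCum v π (π s) t > mesCum v π (π s) s) :=
  mes_sstay_general v π hmono
end

section
/- The Marginal Equal Share (MES) rule satisfies incentive for early arrival (EA): for any monotone normalized valuation v, fixing the arrival order of all other players, a player i who arrives at position p receives total final share at least as large as if she delayed to any later position, i.e., if π' is obtained from π by moving i from position p to a later position (keeping the relative order of others), then φ_MES(G, i) ≥ φ_MES(G', i) where G = (N, v, π), G' = (N, v, π'). -/
variable {α : Type*} [DecidableEq α]

/-- Amount MES gives player `p` at the `t`-th arrival (0-indexed), when players arrive
in the order given by the list `L`: the marginal contribution
`v (take (t+1) L) - v (take t L)` of the new arrival is split equally among the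
`t+1` arrived players. -/
noncomputable def mesStepL (v : Finset α → ℝ) (L : List α) (t : ℕ) (p : α) : ℝ :=
  if p ∈ (L.take (t + 1)).toFinset then
    (v (L.take (t + 1)).toFinset - v (L.take t).toFinset) / ((t + 1 : ℕ) : ℝ)
  else 0

/-- Total (final) MES share of player `p` under arrival order `L`. -/
noncomputable def mesTotalL (v : Finset α → ℝ) (L : List α) (p : α) : ℝ :=
  ∑ t ∈ Finset.range L.length, mesStepL v L t p

/-!
Let `F s` and `W s` be the values of the first `s` other players, without and with `i`.
A player arriving at position `p` receives `(W p - F p)/(p+1)` on arrival and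
`(W t - W (t-1))/(t+1)` at every later step `t`. Moving her from `p` to `p+1` only changes the
payments at steps `p` and `p+1`, and she loses
`(W p - F p)/(p+1) + (F (p+1) - W p)/(p+2) ≥ (W p - F p) (1/(p+1) - 1/(p+2)) ≥ 0`
by monotonicity of `v`. A longer delay is a chain of such one-step delays.
-/

open Finset

/-- `F s`, `W s`: values of the first `s` other players without and with `i`. -/
noncomputable def mesStepAtPos (F W : ℕ → ℝ) (p t : ℕ) : ℝ :=
  if t < p then 0
  else if t = p then (W t - F t) / (t + 1)
  else (W t - W (t - 1)) / (t + 1)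

section
variable {F W : ℕ → ℝ}

theorem sum_mesStepAtPos_succ_le (hFW : ∀ t, F t ≤ W t) (hF : Monotone F) {n p : ℕ}
    (hp : p + 1 < n) :
    ∑ t ∈ range n, mesStepAtPos F W (p + 1) t ≤ ∑ t ∈ range n, mesStepAtPos F W p t := by
  have hdiff : ∑ t ∈ range n, (mesStepAtPos F W p t - mesStepAtPos F W (p + 1) t) =
      (W p - F p) / (p + 1) + (F (p + 1) - W p) / (p + 2) := by
    rw [sum_eq_add_of_mem p (p + 1) (mem_range.2 (by omega)) (mem_range.2 hp) (by omega)]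
    on_goal 2 => intro t _ ⟨h1, h2⟩
    all_goals
      simp only [mesStepAtPos]
      split_ifs <;> first | omega | (push_cast; ring)
  have hloss : 0 ≤ (W p - F p) / (p + 1) + (F (p + 1) - W p) / (p + 2) := by
    have hgap : 0 ≤ W p - F p := sub_nonneg.2 (hFW p)
    calc 0 ≤ (W p - F p) / (p + 1) - (W p - F p) / (p + 2) :=
          sub_nonneg.2 (div_le_div_of_nonneg_left hgap (by positivity) (by linarith))
      _ = (W p - F p) / (p + 1) + (F p - W p) / (p + 2) := by ring
      _ ≤ (W p - F p) / (p + 1) + (F (p + 1) - W p) / (p + 2) := by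
          gcongr; exact hF p.le_succ
  rw [← sub_nonneg, ← sum_sub_distrib, hdiff]
  exact hloss

theorem sum_mesStepAtPos_antitone (hFW : ∀ t, F t ≤ W t) (hF : Monotone F) {n p q : ℕ}
    (hpq : p ≤ q) (hq : q < n) :
    ∑ t ∈ range n, mesStepAtPos F W q t ≤ ∑ t ∈ range n, mesStepAtPos F W p t := by
  induction q, hpq using Nat.le_induction with
  | base => rfl
  | succ q _ ih => exact (sum_mesStepAtPos_succ_le hFW hF hq).trans (ih (by omega))

end

theorem toFinset_take_append_cons {A B : List α} {i : α} {s : ℕ} (hs : A.length < s) :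
    ((A ++ i :: B).take s).toFinset = insert i ((A ++ B).take (s - 1)).toFinset := by
  obtain ⟨k, rfl⟩ : ∃ k, s = A.length + (k + 1) := ⟨s - A.length - 1, by omega⟩
  rw [List.take_length_add_append, List.take_succ_cons, Nat.add_succ_sub_one,
    List.take_length_add_append]
  ext x
  simp only [List.toFinset_append, List.toFinset_cons, mem_union, mem_insert]
  tauto

theorem mesStepL_append_cons (v : Finset α → ℝ) {A B : List α} {i : α} (hiA : i ∉ A)
    (t : ℕ) :
    mesStepL v (A ++ i :: B) t i =
      mesStepAtPos (fun s => v ((A ++ B).take s).toFinset)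
        (fun s => v (insert i ((A ++ B).take s).toFinset)) A.length t := by
  rcases lt_trichotomy t A.length with ht | rfl | ht
  · have hout : i ∉ ((A ++ i :: B).take (t + 1)).toFinset := by
      rw [List.take_append_of_le_length (by omega), List.mem_toFinset]
      exact fun h => hiA (List.mem_of_mem_take h)
    simp [mesStepL, mesStepAtPos, hout, ht]
  · rw [mesStepL, toFinset_take_append_cons (by omega), if_pos (mem_insert_self _ _),
      List.take_append_of_le_length le_rfl]
    simp [mesStepAtPos]
  · rw [mesStepL, toFinset_take_append_cons (by omega), toFinset_take_append_cons ht,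
      if_pos (mem_insert_self _ _)]
    simp [mesStepAtPos, ht.not_gt, ht.ne']

theorem mesTotalL_eq_sum_mesStepAtPos (v : Finset α → ℝ) {L : List α} {i : α} (hi : i ∈ L) :
    mesTotalL v L i =
      ∑ t ∈ range ((L.erase i).length + 1),
        mesStepAtPos (fun s => v ((L.erase i).take s).toFinset)
          (fun s => v (insert i ((L.erase i).take s).toFinset)) (L.idxOf i) t := by
  obtain ⟨A, B, hiA, rfl, herase⟩ := List.exists_erase_eq hi
  rw [herase, List.idxOf_append_of_notMem hiA, List.idxOf_cons_self, add_zero, mesTotalL]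
  simp [mesStepL_append_cons v hiA, add_assoc]

theorem mes_ea_general (v : Finset α → ℝ)
    (hmono : ∀ S T : Finset α, S ⊆ T → v S ≤ v T)
    (L L' : List α) (hperm : L'.Perm L)
    (i : α) (hi : i ∈ L)
    (hothers : L.erase i = L'.erase i)
    (hdelay : L.idxOf i ≤ L'.idxOf i) :
    mesTotalL v L' i ≤ mesTotalL v L i := by
  have hi' : i ∈ L' := hperm.mem_iff.2 hi
  have hpos : L'.idxOf i < (L'.erase i).length + 1 := by
    rw [List.length_erase_of_mem hi', Nat.sub_add_cancel (List.length_pos_of_mem hi')]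
    exact List.idxOf_lt_length_iff.2 hi'
  rw [mesTotalL_eq_sum_mesStepAtPos v hi, mesTotalL_eq_sum_mesStepAtPos v hi', hothers]
  refine sum_mesStepAtPos_antitone (fun t => hmono _ _ (subset_insert _ _)) ?_ hdelay hpos
  exact fun s t hst => hmono _ _ fun x hx =>
    List.mem_toFinset.2 (List.take_subset_take_left _ hst (List.mem_toFinset.1 hx))

/-- The MES rule satisfies incentive for early arrival (EA): for any monotone normalized
valuation, if `L'` is obtained from the arrival order `L` by delaying player `i`
(keeping the relative order of all other players), then `i`'s total MES share
under `L'` is at most her share under `L`. -/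
theorem mes_ea (v : Finset α → ℝ)
    (hnorm : v ∅ = 0)
    (hmono : ∀ S T : Finset α, S ⊆ T → v S ≤ v T)
    (L L' : List α) (hL : L.Nodup) (hL' : L'.Nodup) (hperm : L'.Perm L)
    (i : α) (hi : i ∈ L)
    (hothers : L.erase i = L'.erase i)
    (hdelay : L.idxOf i ≤ L'.idxOf i) :
    mesTotalL v L' i ≤ mesTotalL v L i :=
  mes_ea_general v hmono L L' hperm i hi hothers hdelay
end

section
/- Key step in EA for MES: for an arrival order π = (1,…,n), if player i (arriving at position i) delays to arrive right after player j > i (others keeping order), the difference in i's total share between truthful and delayed arrival is at least (1/j)·(v({1,…,j}∖{i}) − v({1,…,i−1})), which is non-negative by monotonicity. -/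
/-! Every increment `f k - f (k - 1)` of the monotone sequence `f k = v {1, …, k}` is divided
by `k ≤ j` in the truthful order, hence weighs at least as much as after division by `j`; the
increments telescope, so `i`'s truthful share from arrivals `i, …, j` is at least
`(v {1, …, j} - v {1, …, i - 1}) / j`. Splitting this numerator at `v ({1, …, j} \ {i})` leaves
the delayed share plus the claimed bound. -/

open Finset

theorem Finset.sum_Icc_sub_pred {G : Type*} [AddCommGroup G] (f : ℕ → G) {i j : ℕ} (hij : i ≤ j) :
    ∑ k ∈ Icc i j, (f k - f (k - 1)) = f j - f (i - 1) := by
  induction j, hij using Nat.le_induction with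
  | base => simp
  | succ m hm ih =>
    rw [sum_Icc_succ_top (by omega), ih, Nat.add_sub_cancel]
    abel

theorem Monotone.sub_pred_div_le_sum_Icc {f : ℕ → ℝ} (hf : Monotone f) {i j : ℕ} (hij : i ≤ j) :
    (f j - f (i - 1)) / j ≤ ∑ k ∈ Icc i j, (f k - f (k - 1)) / k := by
  rw [← sum_Icc_sub_pred f hij, sum_div]
  refine sum_le_sum fun k hk => ?_
  rcases Nat.eq_zero_or_pos k with rfl | hk0
  · simp
  · exact div_le_div_of_nonneg_left (sub_nonneg.mpr (hf (Nat.sub_le k 1))) (by exact_mod_cast hk0)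
      (by exact_mod_cast (mem_Icc.mp hk).2)

theorem Finset.Icc_one_pred_subset_erase {i j : ℕ} (hij : i ≤ j) :
    Icc 1 (i - 1) ⊆ (Icc 1 j).erase i := by
  intro x
  simp only [mem_Icc, mem_erase]
  omega

theorem mes_ea_key_step_general (v : Finset ℕ → ℝ)
    (hmono : ∀ S T : Finset ℕ, S ⊆ T → v S ≤ v T)
    (i j : ℕ) (hij : i < j) :
    ((∑ k ∈ Finset.Icc i j,
        (v (Finset.Icc 1 k) - v (Finset.Icc 1 (k - 1))) / (k : ℝ))
      - (v (Finset.Icc 1 j) - v ((Finset.Icc 1 j).erase i)) / (j : ℝ)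
      ≥ (1 / (j : ℝ)) * (v ((Finset.Icc 1 j).erase i) - v (Finset.Icc 1 (i - 1))))
    ∧ 0 ≤ (1 / (j : ℝ)) * (v ((Finset.Icc 1 j).erase i) - v (Finset.Icc 1 (i - 1))) := by
  have hprefix : Monotone fun k => v (Icc 1 k) :=
    fun _ _ hkl => hmono _ _ (Icc_subset_Icc_right hkl)
  have hshare := hprefix.sub_pred_div_le_sum_Icc hij.le
  have hgain : 0 ≤ v ((Icc 1 j).erase i) - v (Icc 1 (i - 1)) :=
    sub_nonneg.mpr (hmono _ _ (Icc_one_pred_subset_erase hij.le))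
  have hsplit : (v (Icc 1 j) - v (Icc 1 (i - 1))) / j
      = (v (Icc 1 j) - v ((Icc 1 j).erase i)) / j
        + 1 / j * (v ((Icc 1 j).erase i) - v (Icc 1 (i - 1))) := by
    ring
  exact ⟨by linarith, by positivity⟩

/-- Key step in EA for MES: players `1, …, n` arrive in order, prefixes are `{1, …, k}`.
If player `i` (arriving at position `i`) delays to arrive right after player `j > i`
(others keeping their order), then the difference between `i`'s share from arrivals
`i, …, j` in the truthful order and `i`'s instant share `(v({1..j}) - v({1..j}\{i}))/j`
in the delayed order is at least `(1/j) * (v({1..j}\{i}) - v({1..i-1}))`,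
which is non-negative by monotonicity.  (Shares from arrivals after position `j`
coincide in both orders, so this is the difference of total shares.) -/
theorem mes_ea_key_step (v : Finset ℕ → ℝ)
    (hnorm : v ∅ = 0)
    (hmono : ∀ S T : Finset ℕ, S ⊆ T → v S ≤ v T)
    (n i j : ℕ) (h1i : 1 ≤ i) (hij : i < j) (hjn : j ≤ n) :
    ((∑ k ∈ Finset.Icc i j,
        (v (Finset.Icc 1 k) - v (Finset.Icc 1 (k - 1))) / (k : ℝ))
      - (v (Finset.Icc 1 j) - v ((Finset.Icc 1 j).erase i)) / (j : ℝ)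
      ≥ (1 / (j : ℝ)) * (v ((Finset.Icc 1 j).erase i) - v (Finset.Icc 1 (i - 1))))
    ∧ 0 ≤ (1 / (j : ℝ)) * (v ((Finset.Icc 1 j).erase i) - v (Finset.Icc 1 (i - 1))) :=
  mes_ea_key_step_general v hmono i j hij
end

section
/- The Non-Dummy Marginal Equal Share (NDMES) rule satisfies the Online-Dummy axiom: in every prefix sub-game, any dummy player of that prefix sub-game receives zero cumulative share under NDMES. -/
variable {α : Type*} [DecidableEq α]

/-- Player `j` is a dummy player of the sub-game restricted to `S`. -/
def IsDummy (v : Finset α → ℝ) (S : Finset α) (j : α) : Prop :=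
  ∀ T ⊆ S, v (insert j T) = v T

open Classical in
/-- The non-dummy players of the sub-game restricted to `S`. -/
noncomputable def nonDummies (v : Finset α → ℝ) (S : Finset α) : Finset α :=
  S.filter (fun j => ¬ IsDummy v S j)

/-- Amount NDMES gives player `p` at step `t`: the marginal contribution of the new
arrival `π t` is split equally among the non-dummy players of the current prefix. -/
noncomputable def ndmesStep {n : ℕ} (v : Finset α → ℝ) (π : Fin n → α) (t : Fin n) (p : α) : ℝ :=
  if p ∈ nonDummies v (prefixSet π t) then
    (v (prefixSet π t) - v ((prefixSet π t).erase (π t))) /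
      ((nonDummies v (prefixSet π t)).card : ℝ)
  else 0

/-- Cumulative NDMES share of player `p` after step `t`. -/
noncomputable def ndmesCum {n : ℕ} (v : Finset α → ℝ) (π : Fin n → α) (p : α) (t : Fin n) : ℝ :=
  ∑ s ∈ Finset.Iic t, ndmesStep v π s p

theorem prefixSet_mono {n : ℕ} (π : Fin n → α) {s t : Fin n} (hst : s ≤ t) :
    prefixSet π s ⊆ prefixSet π t :=
  Finset.image_subset_image (Finset.Iic_subset_Iic.mpr hst)

theorem IsDummy.anti {v : Finset α → ℝ} {S S' : Finset α} {j : α} (h : IsDummy v S j)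
    (hS' : S' ⊆ S) : IsDummy v S' j :=
  fun T hT => h T (hT.trans hS')

open Classical in
theorem mem_nonDummies {v : Finset α → ℝ} {S : Finset α} {p : α} :
    p ∈ nonDummies v S ↔ p ∈ S ∧ ¬IsDummy v S p :=
  Finset.mem_filter

theorem ndmesStep_eq_zero_of_isDummy {n : ℕ} {v : Finset α → ℝ} {π : Fin n → α} {s : Fin n}
    {p : α} (h : IsDummy v (prefixSet π s) p) : ndmesStep v π s p = 0 :=
  if_neg fun hp => (mem_nonDummies.mp hp).2 h

theorem ndmes_online_dummy_general {n : ℕ} (v : Finset α → ℝ) (π : Fin n → α)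
    (t : Fin n) (j : α)
    (hdum : IsDummy v (prefixSet π t) j) :
    ndmesCum v π j t = 0 :=
  Finset.sum_eq_zero fun _ hs =>
    ndmesStep_eq_zero_of_isDummy (hdum.anti (prefixSet_mono π (Finset.mem_Iic.mp hs)))

/-- NDMES satisfies the Online-Dummy axiom: in every prefix sub-game, any dummy player
of that prefix sub-game has zero cumulative NDMES share. -/
theorem ndmes_online_dummy {n : ℕ} (v : Finset α → ℝ) (π : Fin n → α)
    (hinj : Function.Injective π)
    (hnorm : v ∅ = 0)
    (hmono : ∀ S T : Finset α, S ⊆ T → v S ≤ v T)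
    (t : Fin n) (j : α) (hj : j ∈ prefixSet π t)
    (hdum : IsDummy v (prefixSet π t) j) :
    ndmesCum v π j t = 0 :=
  ndmes_online_dummy_general v π t j hdum
end

section
/- In a simple online cooperative game (0-1 valued monotone valuation with v(N) = 1), the ULMES rule satisfies incentive for early arrival: for any player i, fixing the relative arrival order of all other players, delaying i's arrival never strictly increases i's total share. -/
variable {α : Type*} [DecidableEq α]

open Classical in
/-- ULMES backward-elimination scan: given the full arrived set value `v full`, the new
arrival `a`, and the arrived players listed from latest to earliest, remove a scanned
player `q` from the tentative set `S` whenever `v ((S \ {q}) ∪ {a}) = v full`. -/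
noncomputable def ulmesScan (v : Finset α → ℝ) (full : Finset α) (a : α) :
    List α → Finset α → Finset α
  | [], S => S
  | q :: rest, S =>
      if v (insert a (S.erase q)) = v full then ulmesScan v full a rest (S.erase q)
      else ulmesScan v full a rest S

/-- The surviving sharing set at the `t`-th arrival (0-indexed) under arrival order `L`. -/
noncomputable def ulmesSetL [Inhabited α] (v : Finset α → ℝ) (L : List α) (t : ℕ) : Finset α :=
  ulmesScan v (L.take (t + 1)).toFinset (L.getD t default)
    (L.take (t + 1)).reverse (L.take (t + 1)).toFinset

/-- Amount ULMES gives player `p` at the `t`-th arrival: the marginal contribution of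
the new arrival is split equally among the surviving sharing set. -/
noncomputable def ulmesStepL [Inhabited α] (v : Finset α → ℝ) (L : List α) (t : ℕ) (p : α) : ℝ :=
  if p ∈ ulmesSetL v L t then
    (v (L.take (t + 1)).toFinset - v ((L.take (t + 1)).toFinset.erase (L.getD t default))) /
      ((ulmesSetL v L t).card : ℝ)
  else 0

/-- Total ULMES share of player `p` under arrival order `L`. -/
noncomputable def ulmesTotalL [Inhabited α] (v : Finset α → ℝ) (L : List α) (p : α) : ℝ :=
  ∑ t ∈ Finset.range L.length, ulmesStepL v L t p

/-!
Since `v` is `0-1`-valued and monotone, the whole value `1` is paid out at the pivot, the first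
arrival at which the arrived set reaches value `1`. If `i` is not in the sharing set at the pivot
of the delayed order `L'`, she gets nothing. Otherwise she arrived before that pivot, so the
arrived sets of `L` and `L'` agree from then on: the pivot of `L'` is also an arrival step of `L`
with the same arrived set and arriver, and the two backward scans differ only in where `i` is
scanned. The elimination test `v (insert a (S.erase q)) = 1` is upward closed in `S` and the
tentative set only shrinks, so once `i` survives her test she survives it at any later point of
the scan, and both scans return the same sharing set.
-/

lemma List.toFinset_take_subset_toFinset_take (L : List α) {m n : ℕ} (h : m ≤ n) :
    (L.take m).toFinset ⊆ (L.take n).toFinset := fun _ hx =>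
  List.mem_toFinset.2 (List.take_subset_take_left L h (List.mem_toFinset.1 hx))

lemma List.Nodup.toFinset_take_add_one_erase {L : List α} (hL : L.Nodup) {t : ℕ}
    (ht : t < L.length) (d : α) :
    (L.take (t + 1)).toFinset.erase (L.getD t d) = (L.take t).toFinset := by
  have hnodup := hL.sublist (List.take_sublist (t + 1) L)
  rw [List.take_succ_eq_append_getElem ht, List.nodup_append] at hnodup
  have hnotMem : L[t] ∉ (L.take t).toFinset := fun h =>
    hnodup.2.2 _ (List.mem_toFinset.1 h) _ (List.mem_singleton_self _) rfl
  rw [List.take_succ_eq_append_getElem ht, List.getD_eq_getElem L d ht, List.toFinset_append,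
    List.toFinset_cons, List.toFinset_nil, insert_empty_eq, Finset.union_singleton,
    Finset.erase_insert hnotMem]

lemma List.exists_eq_append_cons_append_of_erase_eq {L L' : List α} {i : α} (hL : L.Nodup)
    (hL' : L'.Nodup) (hi : i ∈ L) (hi' : i ∈ L') (herase : L.erase i = L'.erase i)
    (hidx : L.idxOf i ≤ L'.idxOf i) :
    ∃ A C D, L = A ++ i :: C ++ D ∧ L' = A ++ C ++ [i] ++ D := by
  obtain ⟨A, B, rfl⟩ := List.append_of_mem hi
  obtain ⟨A', D, rfl⟩ := List.append_of_mem hi'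
  have hiA : i ∉ A := (List.nodup_middle.1 hL).notMem ∘ List.mem_append_left B
  have hiA' : i ∉ A' := (List.nodup_middle.1 hL').notMem ∘ List.mem_append_left D
  rw [List.idxOf_append_of_notMem hiA, List.idxOf_append_of_notMem hiA', List.idxOf_cons_self]
    at hidx
  rw [List.erase_append_right _ hiA, List.erase_append_right _ hiA', List.erase_cons_head,
    List.erase_cons_head] at herase
  rcases List.append_eq_append_iff.1 herase with ⟨C, rfl, rfl⟩ | ⟨C, rfl, rfl⟩
  · exact ⟨A, C, D, by simp, by simp⟩
  · obtain rfl : C = [] := by simpa using hidx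
    exact ⟨A', [], B, by simp, by simp⟩

section Scan

variable {v : Finset α → ℝ} {full : Finset α} {a : α}

lemma ulmesScan_subset (l : List α) (S : Finset α) : ulmesScan v full a l S ⊆ S := by
  induction l generalizing S with
  | nil => exact subset_rfl
  | cons q rest ih =>
    rw [ulmesScan]
    split
    · exact (ih _).trans (Finset.erase_subset _ _)
    · exact ih _

variable (hup : ∀ S T : Finset α, S ⊆ T → v S = v full → v T = v full)
include hup

lemma ulmesScan_append_cons_eq_of_kept {i : α} {S₀ : Finset α}
    (hkept : v (insert a (S₀.erase i)) ≠ v full) (l₁ l₂ : List α) {S : Finset α}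
    (hS : S ⊆ S₀) :
    ulmesScan v full a (l₁ ++ i :: l₂) S = ulmesScan v full a (l₁ ++ l₂) S := by
  induction l₁ generalizing S with
  | nil =>
    have hS' : insert a (S.erase i) ⊆ insert a (S₀.erase i) :=
      Finset.insert_subset_insert a (Finset.erase_subset_erase i hS)
    rw [List.nil_append, ulmesScan, if_neg fun h => hkept (hup _ _ hS' h), List.nil_append]
  | cons q rest ih =>
    simp only [List.cons_append, ulmesScan]
    split
    · exact ih ((Finset.erase_subset q S).trans hS)
    · exact ih hS

lemma ulmesScan_move_eq_of_mem {i : α} (l₀ l₁ l₂ : List α) {S : Finset α}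
    (hi : i ∈ ulmesScan v full a (l₀ ++ i :: (l₁ ++ l₂)) S) :
    ulmesScan v full a (l₀ ++ i :: (l₁ ++ l₂)) S
      = ulmesScan v full a (l₀ ++ l₁ ++ i :: l₂) S := by
  induction l₀ generalizing S with
  | nil =>
    rw [List.nil_append, ulmesScan] at hi ⊢
    split at hi
    · exact absurd (ulmesScan_subset _ _ hi) (Finset.notMem_erase i S)
    · rename_i hkept
      rw [if_neg hkept, List.nil_append,
        ulmesScan_append_cons_eq_of_kept hup hkept l₁ l₂ subset_rfl]
  | cons q rest ih =>
    simp only [List.cons_append, ulmesScan] at hi ⊢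
    by_cases h : v (insert a (S.erase q)) = v full
    · simp only [if_pos h] at hi ⊢; exact ih hi
    · simp only [if_neg h] at hi ⊢; exact ih hi

end Scan

section SimpleGame

variable {v : Finset α → ℝ}

omit [DecidableEq α] in
lemma eq_one_of_subset_of_eq_one (h01 : ∀ S : Finset α, v S = 0 ∨ v S = 1)
    (hmono : ∀ S T : Finset α, S ⊆ T → v S ≤ v T) {S T : Finset α} (hST : S ⊆ T)
    (hS : v S = 1) : v T = 1 :=
  (h01 T).resolve_left fun hT => by linarith [hmono S T hST]

omit [DecidableEq α] in
lemma eq_zero_of_subset_of_eq_zero (h01 : ∀ S : Finset α, v S = 0 ∨ v S = 1)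
    (hmono : ∀ S T : Finset α, S ⊆ T → v S ≤ v T) {S T : Finset α} (hST : S ⊆ T)
    (hT : v T = 0) : v S = 0 :=
  (h01 S).resolve_right fun hS => by linarith [hmono S T hST]

def IsPivot (v : Finset α → ℝ) (L : List α) (p : ℕ) : Prop :=
  p < L.length ∧ v (L.take (p + 1)).toFinset = 1 ∧ ∀ s < p, v (L.take (s + 1)).toFinset ≠ 1

lemma exists_isPivot {L : List α} (hL : L ≠ []) (hv : v L.toFinset = 1) :
    ∃ p, IsPivot v L p := by
  classical
  have hlast : v (L.take (L.length - 1 + 1)).toFinset = 1 := by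
    rwa [Nat.sub_add_cancel (List.length_pos_iff.2 hL), List.take_length]
  have hex : ∃ t, v (L.take (t + 1)).toFinset = 1 := ⟨_, hlast⟩
  refine ⟨Nat.find hex, ?_, Nat.find_spec hex, fun s hs => Nat.find_min hex hs⟩
  have := Nat.find_min' hex hlast
  have := List.length_pos_iff.2 hL
  omega

lemma ulmesStepL_nonneg [Inhabited α] (hmono : ∀ S T : Finset α, S ⊆ T → v S ≤ v T)
    (L : List α) (t : ℕ) (x : α) : 0 ≤ ulmesStepL v L t x := by
  unfold ulmesStepL
  split
  · exact div_nonneg (sub_nonneg.2 (hmono _ _ (Finset.erase_subset _ _))) (Nat.cast_nonneg _)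
  · exact le_rfl

lemma ulmesTotalL_nonneg [Inhabited α] (hmono : ∀ S T : Finset α, S ⊆ T → v S ≤ v T)
    (L : List α) (x : α) : 0 ≤ ulmesTotalL v L x :=
  Finset.sum_nonneg fun t _ => ulmesStepL_nonneg hmono L t x

lemma ulmesStepL_le_ulmesTotalL [Inhabited α]
    (hmono : ∀ S T : Finset α, S ⊆ T → v S ≤ v T) {L : List α} {t : ℕ} (ht : t < L.length) (x : α) :
    ulmesStepL v L t x ≤ ulmesTotalL v L x :=
  Finset.single_le_sum (fun s _ => ulmesStepL_nonneg hmono L s x) (Finset.mem_range.2 ht)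

lemma IsPivot.ulmesStepL_eq_zero [Inhabited α] (h01 : ∀ S : Finset α, v S = 0 ∨ v S = 1)
    (hmono : ∀ S T : Finset α, S ⊆ T → v S ≤ v T) {L : List α} (hL : L.Nodup) {p t : ℕ}
    (hp : IsPivot v L p) (ht : t < L.length) (htp : t ≠ p) (x : α) : ulmesStepL v L t x = 0 := by
  have hmarginal : v (L.take (t + 1)).toFinset = v (L.take t).toFinset := by
    have hsub : (L.take t).toFinset ⊆ (L.take (t + 1)).toFinset :=
      List.toFinset_take_subset_toFinset_take L t.le_succ
    rcases htp.lt_or_gt with htp | htp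
    · have h0 : v (L.take (t + 1)).toFinset = 0 := (h01 _).resolve_right (hp.2.2 t htp)
      rw [h0, eq_zero_of_subset_of_eq_zero h01 hmono hsub h0]
    · have h1 : v (L.take t).toFinset = 1 := eq_one_of_subset_of_eq_one h01 hmono
        (List.toFinset_take_subset_toFinset_take L htp) hp.2.1
      rw [h1, eq_one_of_subset_of_eq_one h01 hmono hsub h1]
  unfold ulmesStepL
  rw [hL.toFinset_take_add_one_erase ht, hmarginal, sub_self, zero_div, ite_self]

lemma IsPivot.ulmesTotalL_eq [Inhabited α] (h01 : ∀ S : Finset α, v S = 0 ∨ v S = 1)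
    (hmono : ∀ S T : Finset α, S ⊆ T → v S ≤ v T) {L : List α} (hL : L.Nodup) {p : ℕ}
    (hp : IsPivot v L p) (x : α) : ulmesTotalL v L x = ulmesStepL v L p x :=
  Finset.sum_eq_single_of_mem p (Finset.mem_range.2 hp.1) fun _ ht htp =>
    hp.ulmesStepL_eq_zero h01 hmono hL (Finset.mem_range.1 ht) htp x

lemma mem_take_of_mem_ulmesSetL [Inhabited α] {L : List α} {t : ℕ} (ht : t < L.length) {x : α}
    (hx : x ∈ ulmesSetL v L t) : x ∈ L.take t := by
  have harrived : L[t] ∈ (L.take t ++ [L[t]]).toFinset :=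
    List.mem_toFinset.2 (List.mem_append_right _ (List.mem_singleton_self _))
  unfold ulmesSetL at hx
  rw [List.getD_eq_getElem L default ht, List.take_succ_eq_append_getElem ht, List.reverse_append,
    List.reverse_singleton, List.singleton_append, ulmesScan, Finset.insert_erase harrived,
    if_pos rfl] at hx
  have hx' := ulmesScan_subset _ _ hx
  rw [Finset.mem_erase, List.mem_toFinset, List.mem_append, List.mem_singleton] at hx'
  exact hx'.2.resolve_right hx'.1

lemma ulmesStepL_delay_eq_of_mem [Inhabited α] (h01 : ∀ S : Finset α, v S = 0 ∨ v S = 1)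
    (hmono : ∀ S T : Finset α, S ⊆ T → v S ≤ v T) {A C D : List α} {i : α} {t : ℕ}
    (ht : (A ++ C).length < t) (hv : v ((A ++ C ++ [i] ++ D).take (t + 1)).toFinset = 1)
    (hi : i ∈ ulmesSetL v (A ++ C ++ [i] ++ D) t) :
    ulmesStepL v (A ++ C ++ [i] ++ D) t = ulmesStepL v (A ++ i :: C ++ D) t := by
  obtain ⟨k, rfl⟩ : ∃ k, t = (A ++ C ++ [i]).length + k :=
    ⟨t - ((A ++ C).length + 1), by simp at ht ⊢; omega⟩
  have hlen : (A ++ i :: C).length = (A ++ C ++ [i]).length := by simp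
  have htake' : (A ++ C ++ [i] ++ D).take ((A ++ C ++ [i]).length + k + 1)
      = A ++ C ++ [i] ++ D.take (k + 1) := by
    rw [add_assoc, List.take_length_add_append]
  have htake : (A ++ i :: C ++ D).take ((A ++ C ++ [i]).length + k + 1)
      = A ++ i :: C ++ D.take (k + 1) := by
    rw [add_assoc, ← hlen, List.take_length_add_append]
  have hget' : (A ++ C ++ [i] ++ D).getD ((A ++ C ++ [i]).length + k) default
      = D.getD k default := by
    rw [List.getD_append_right _ _ _ _ (by omega), Nat.add_sub_cancel_left]
  have hget : (A ++ i :: C ++ D).getD ((A ++ C ++ [i]).length + k) default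
      = D.getD k default := by
    rw [← hlen, List.getD_append_right _ _ _ _ (by omega), Nat.add_sub_cancel_left]
  have hfinset : (A ++ i :: C ++ D.take (k + 1)).toFinset
      = (A ++ C ++ [i] ++ D.take (k + 1)).toFinset := by
    ext x; simp only [List.mem_toFinset, List.mem_append, List.mem_cons]; tauto
  rw [htake'] at hv
  have hup : ∀ S T : Finset α, S ⊆ T →
      v S = v (A ++ C ++ [i] ++ D.take (k + 1)).toFinset →
      v T = v (A ++ C ++ [i] ++ D.take (k + 1)).toFinset := fun S T hST hS => by
    rw [hv] at hS ⊢; exact eq_one_of_subset_of_eq_one h01 hmono hST hS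
  have hset : ulmesSetL v (A ++ C ++ [i] ++ D) ((A ++ C ++ [i]).length + k)
      = ulmesSetL v (A ++ i :: C ++ D) ((A ++ C ++ [i]).length + k) := by
    unfold ulmesSetL at hi ⊢
    have hrev' : (A ++ C ++ [i] ++ D.take (k + 1)).reverse
        = (D.take (k + 1)).reverse ++ i :: (C.reverse ++ A.reverse) := by simp
    have hrev : (A ++ i :: C ++ D.take (k + 1)).reverse
        = (D.take (k + 1)).reverse ++ C.reverse ++ i :: A.reverse := by simp
    rw [htake', hget', hrev'] at hi
    rw [htake', hget', hrev', htake, hget, hrev, hfinset]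
    exact ulmesScan_move_eq_of_mem hup _ _ _ hi
  funext x
  unfold ulmesStepL
  rw [hset, htake, htake', hget, hget', hfinset]

end SimpleGame

theorem ulmes_ea_simple_general [Fintype α] [Inhabited α]
    (v : Finset α → ℝ)
    (h01 : ∀ S : Finset α, v S = 0 ∨ v S = 1)
    (hfull : v Finset.univ = 1)
    (hmono : ∀ S T : Finset α, S ⊆ T → v S ≤ v T)
    (L L' : List α) (hL : L.Nodup) (hL' : L'.Nodup)
    (hall : L.toFinset = Finset.univ) (hperm : L'.Perm L)
    (i : α) (hi : i ∈ L)
    (hothers : L.erase i = L'.erase i)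
    (hdelay : L.idxOf i ≤ L'.idxOf i) :
    ulmesTotalL v L' i ≤ ulmesTotalL v L i := by
  have hi' : i ∈ L' := hperm.mem_iff.2 hi
  have hv' : v L'.toFinset = 1 := by rw [List.toFinset_eq_of_perm _ _ hperm, hall, hfull]
  obtain ⟨p, hp⟩ := exists_isPivot (List.ne_nil_of_mem hi') hv'
  rw [hp.ulmesTotalL_eq h01 hmono hL' i]
  by_cases hmem : i ∈ ulmesSetL v L' p
  case neg =>
    rw [ulmesStepL, if_neg hmem]
    exact ulmesTotalL_nonneg hmono L i
  obtain ⟨A, C, D, rfl, rfl⟩ :=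
    List.exists_eq_append_cons_append_of_erase_eq hL hL' hi hi' hothers hdelay
  have hiAC : i ∉ A ++ C := by
    rw [List.append_assoc, List.singleton_append] at hL'
    exact (List.nodup_cons.1 (List.nodup_middle.1 hL')).1 ∘ List.mem_append_left D
  have hpAC : (A ++ C).length < p := by
    have := (List.mem_take_iff_idxOf_lt hi').1 (mem_take_of_mem_ulmesSetL hp.1 hmem)
    rwa [List.append_assoc, List.idxOf_append_of_notMem hiAC, List.singleton_append,
      List.idxOf_cons_self, add_zero] at this
  rw [ulmesStepL_delay_eq_of_mem h01 hmono hpAC hp.2.1 hmem]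
  exact ulmesStepL_le_ulmesTotalL hmono (hperm.length_eq ▸ hp.1) i

/-- In a simple online cooperative game (`0-1`-valued monotone normalized valuation with
`v N = 1`), ULMES satisfies incentive for early arrival: for any player `i`, if `L'` is
obtained from the arrival order `L` by delaying `i` (keeping the relative order of all
other players), then `i`'s total ULMES share under `L'` is at most her share under `L`. -/
theorem ulmes_ea_simple [Fintype α] [Inhabited α]
    (v : Finset α → ℝ)
    (h01 : ∀ S : Finset α, v S = 0 ∨ v S = 1)
    (hnorm : v ∅ = 0) (hfull : v Finset.univ = 1)
    (hmono : ∀ S T : Finset α, S ⊆ T → v S ≤ v T)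
    (L L' : List α) (hL : L.Nodup) (hL' : L'.Nodup)
    (hall : L.toFinset = Finset.univ) (hperm : L'.Perm L)
    (i : α) (hi : i ∈ L)
    (hothers : L.erase i = L'.erase i)
    (hdelay : L.idxOf i ≤ L'.idxOf i) :
    ulmesTotalL v L' i ≤ ulmesTotalL v L i :=
  ulmes_ea_simple_general v h01 hfull hmono L L' hL hL' hall hperm i hi hothers hdelay
end

section
/- The extended RFC rule fails PART: in the SOCG with N = {1,2}, π = (1,2), v({1}) = v({2}) = 0, v({1,2}) = 1, the RFC rule awards the full value 1 to player 1, while player 2, who is contributional (v({1,2}) > v({1})), receives 0. -/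
/- Player `0` is contributional when player `1` arrives (`v {0,1} > v {1}`), so, arriving first,
it is the earliest member of `C` and takes the whole marginal value; player `1` gets nothing,
although it is contributional too (`v {0,1} > v {0}`). -/

open Classical in
/-- The RFC rule for the two-player game with arrival order `(0, 1)`: player `0` first
receives `v {0}`; when player `1` arrives, the whole marginal value `v {0,1} - v {0}`
is awarded to the earliest-arrived player of
`C = {j : v {0,1} > v ({0,1} \ {j})}`. -/
noncomputable def rfc2 (v : Finset (Fin 2) → ℝ) (p : Fin 2) : ℝ :=
  let C : Finset (Fin 2) :=
    Finset.univ.filter (fun j => v {0, 1} > v (({0, 1} : Finset (Fin 2)).erase j))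
  let winner : Fin 2 := if (0 : Fin 2) ∈ C then 0 else 1
  (if p = 0 then v {0} else 0) + (if p = winner then v {0, 1} - v {0} else 0)

lemma pair_erase_one : (({0, 1} : Finset (Fin 2)).erase 1) = {0} := by decide

section

variable {v : Finset (Fin 2) → ℝ}

lemma rfc2_zero_of_first_contributional (hv : v {1} < v {0, 1}) : rfc2 v 0 = v {0, 1} := by
  simp [rfc2, hv]

lemma rfc2_one_of_first_contributional (hv : v {1} < v {0, 1}) : rfc2 v 1 = 0 := by
  simp [rfc2, hv]

end

theorem erfc_fails_part_general (v : Finset (Fin 2) → ℝ)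
    (h0 : v {0} = 0) (h1 : v {1} = 0) (h01 : v {0, 1} = 1) :
    rfc2 v 0 = 1 ∧ rfc2 v 1 = 0 ∧ v {0, 1} > v (({0, 1} : Finset (Fin 2)).erase 1) := by
  have first_contributional : v {1} < v {0, 1} := by rw [h1, h01]; exact one_pos
  refine ⟨?_, rfc2_one_of_first_contributional first_contributional, ?_⟩
  · rw [rfc2_zero_of_first_contributional first_contributional, h01]
  · rw [pair_erase_one, h0, h01]; exact one_pos

/-- The (extended) RFC rule fails PART: in the SOCG with two players `0, 1` arriving in
order `(0, 1)`, `v {0} = v {1} = 0` and `v {0,1} = 1`, RFC awards the full value `1` to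
player `0`, while player `1`, who is contributional (`v {0,1} > v {0}`), receives `0`. -/
theorem erfc_fails_part (v : Finset (Fin 2) → ℝ)
    (hnorm : v ∅ = 0) (h0 : v {0} = 0) (h1 : v {1} = 0) (h01 : v {0, 1} = 1) :
    rfc2 v 0 = 1 ∧ rfc2 v 1 = 0 ∧ v {0, 1} > v (({0, 1} : Finset (Fin 2)).erase 1) :=
  erfc_fails_part_general v h0 h1 h01
end

section
/- The DMC rule fails S-STAY: in the SOCG with N = {1,2,3}, π = (1,2,3), all proper-subset coalition values 0 and v({1,2,3}) = 1, DMC allocates (0,0,1), but players 1 and 2 satisfy v({1,2,3}) > v({1,2,3}∖{j}) and receive no increase at player 3's arrival, violating S-STAY. -/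
/-- The set of the first `k` arrived players under the arrival order `(0, 1, 2)`. -/
def prefix3 (k : ℕ) : Finset (Fin 3) :=
  Finset.univ.filter (fun p => (p : ℕ) < k)

/-- Cumulative DMC share of player `j` after step `t` (steps `0, 1, 2`; the player
arriving at step `s` receives exactly the marginal contribution
`v (prefix3 (s+1)) - v (prefix3 s)` and nothing later). -/
noncomputable def dmcCum (v : Finset (Fin 3) → ℝ) (j : Fin 3) (t : ℕ) : ℝ :=
  ∑ s ∈ Finset.range (t + 1),
    if (j : ℕ) = s then v (prefix3 (s + 1)) - v (prefix3 s) else 0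

/-
Under DMC a player's cumulative share is its marginal contribution on arrival and never
changes afterwards. In the game where only the grand coalition has value 1, players 0 and 1
join proper coalitions and contribute nothing, so their shares stay at 0 even when player 2
completes the coalition, although removing either of them from it destroys its value.
-/

lemma prefix3_three : prefix3 3 = Finset.univ := by decide

lemma prefix3_ne_univ {k : ℕ} (hk : k < 3) : prefix3 k ≠ Finset.univ := by
  intro h
  have : (2 : Fin 3) ∈ prefix3 k := h ▸ Finset.mem_univ _
  simp only [prefix3, Finset.mem_filter, Finset.mem_univ, true_and, Fin.isValue,
    Fin.val_two] at this
  omega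

lemma dmcCum_eq (v : Finset (Fin 3) → ℝ) (j : Fin 3) (t : ℕ) :
    dmcCum v j t = if (j : ℕ) ≤ t then v (prefix3 (j + 1)) - v (prefix3 j) else 0 := by
  simp only [dmcCum, Finset.sum_ite_eq, Finset.mem_range, Nat.lt_succ_iff]

/-- The DMC rule fails S-STAY: in the SOCG on players `0, 1, 2` (arrival order
`(0,1,2)`) with all proper coalitions worth `0` and the grand coalition worth `1`,
DMC allocates `(0, 0, 1)`; players `0` and `1` satisfy
`v univ > v (univ \ {j})` at the contributional arrival of player `2`, yet their
cumulative shares do not strictly increase at that step, violating S-STAY. -/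
theorem dmc_fails_sstay (v : Finset (Fin 3) → ℝ)
    (hproper : ∀ S : Finset (Fin 3), S ≠ Finset.univ → v S = 0)
    (hfull : v Finset.univ = 1) :
    dmcCum v 0 2 = 0 ∧ dmcCum v 1 2 = 0 ∧ dmcCum v 2 2 = 1 ∧
    v Finset.univ > v (Finset.univ.erase 0) ∧
    v Finset.univ > v (Finset.univ.erase 1) ∧
    v Finset.univ > v (Finset.univ.erase 2) ∧
    ¬ dmcCum v 0 2 > dmcCum v 0 0 ∧
    ¬ dmcCum v 1 2 > dmcCum v 1 1 := by
  have hprefix : ∀ k < 3, v (prefix3 k) = 0 := fun k hk => hproper _ (prefix3_ne_univ hk)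
  have herase : ∀ j : Fin 3, v (Finset.univ.erase j) = 0 := fun j =>
    hproper _ (Finset.erase_ssubset (Finset.mem_univ j)).ne
  simp [dmcCum_eq, prefix3_three, hprefix, herase, hfull]
end

section
/- The IR refinement preserves efficiency and yields individual rationality for superadditive valuations: if at each arrival of player i the rule first gives i the amount v({i}) and then distributes the remainder v(Sᵢ) − v(Sᵢ∖{i}) − v({i}) (which is non-negative by superadditivity) among arrived players as non-negative amounts summing to that remainder, then each player's final cumulative share is at least v({i}), and the total distributed equals v(N). -/
/-- The set of players arrived up to and including step `t`, under arrival order `π`. -/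
def arrivedSet {n : ℕ} (π : Equiv.Perm (Fin n)) (t : Fin n) : Finset (Fin n) :=
  (Finset.Iic t).image π

/-!
At step `t` the arrival `π t` receives `v {π t}` and the others share the residual, so the
payments of step `t` add up to the marginal contribution of `π t` to the arrived coalition;
along the arrival order these marginal contributions telescope to `v univ - v ∅`.
Superadditivity applied to `S.erase a` and `{a}` makes every residual non-negative.
-/

open Finset

/-- Indexed by `ℕ` rather than `Fin n` so that `k = n` (everyone arrived) is allowed. -/
def arrivedBefore {n : ℕ} (π : Equiv.Perm (Fin n)) (k : ℕ) : Finset (Fin n) :=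
  (univ.filter fun j : Fin n => (j : ℕ) < k).image π

section Arrival

variable {n : ℕ} (π : Equiv.Perm (Fin n))

@[simp]
theorem arrivedBefore_zero : arrivedBefore π 0 = ∅ := by
  simp [arrivedBefore]

@[simp]
theorem arrivedBefore_self : arrivedBefore π n = univ := by
  simp [arrivedBefore, Fin.is_lt, Finset.image_univ_equiv]

theorem arrivedSet_eq_arrivedBefore (t : Fin n) : arrivedSet π t = arrivedBefore π (t + 1) := by
  unfold arrivedSet arrivedBefore
  congr 1
  ext j
  simp only [mem_Iic, mem_filter, mem_univ, true_and, Nat.lt_succ_iff, Fin.le_def]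

theorem mem_arrivedSet_self (t : Fin n) : π t ∈ arrivedSet π t :=
  mem_image_of_mem π (mem_Iic.2 le_rfl)

theorem arrivedSet_erase_self (t : Fin n) : (arrivedSet π t).erase (π t) = arrivedBefore π t := by
  unfold arrivedSet arrivedBefore
  rw [← image_erase π.injective]
  congr 1
  ext j
  simp only [mem_erase, mem_Iic, mem_filter, mem_univ, true_and, Fin.le_def]
  omega

theorem sum_marginal_arrivedSet {G : Type*} [AddCommGroup G] (v : Finset (Fin n) → G) :
    ∑ t, (v (arrivedSet π t) - v ((arrivedSet π t).erase (π t))) = v univ - v ∅ := by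
  simp only [arrivedSet_erase_self]
  simp only [arrivedSet_eq_arrivedBefore]
  rw [Fin.sum_univ_eq_sum_range (fun k => v (arrivedBefore π (k + 1)) - v (arrivedBefore π k)),
    sum_range_sub (fun k => v (arrivedBefore π k)), arrivedBefore_self, arrivedBefore_zero]

end Arrival

theorem marginal_sub_singleton_nonneg {α : Type*} [DecidableEq α] (v : Finset α → ℝ)
    (hsuper : ∀ S T : Finset α, Disjoint S T → v S + v T ≤ v (S ∪ T))
    {S : Finset α} {a : α} (ha : a ∈ S) : 0 ≤ v S - v (S.erase a) - v {a} := by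
  have h := hsuper (S.erase a) {a} (disjoint_singleton_right.2 (notMem_erase a S))
  rw [union_singleton, insert_erase ha] at h
  linarith

theorem ir_refinement_general {n : ℕ}
    (v : Finset (Fin n) → ℝ) (π : Equiv.Perm (Fin n))
    (hnorm : v ∅ = 0)
    (hsuper : ∀ S T : Finset (Fin n), Disjoint S T → v S + v T ≤ v (S ∪ T))
    (r : Fin n → Fin n → ℝ)
    (hrnonneg : ∀ t p, 0 ≤ r t p)
    (hrsum : ∀ t, ∑ p, r t p =
      v (arrivedSet π t) - v ((arrivedSet π t).erase (π t)) - v {π t}) :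
    (∀ t : Fin n,
      0 ≤ v (arrivedSet π t) - v ((arrivedSet π t).erase (π t)) - v {π t}) ∧
    (∀ p : Fin n, v {p} ≤ v {p} + ∑ t, r t p) ∧
    (∑ p, (v {p} + ∑ t, r t p)) = v Finset.univ := by
  refine ⟨fun t => marginal_sub_singleton_nonneg v hsuper (mem_arrivedSet_self π t),
    fun p => le_add_of_nonneg_right (sum_nonneg fun t _ => hrnonneg t p), ?_⟩
  calc ∑ p, (v {p} + ∑ t, r t p)
      = ∑ t, (v {π t} + ∑ p, r t p) := by
        rw [sum_add_distrib, sum_add_distrib, sum_comm, Equiv.sum_comp π (fun p => v {p})]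
    _ = ∑ t, (v (arrivedSet π t) - v ((arrivedSet π t).erase (π t))) := by
        simp only [hrsum, add_sub_cancel]
    _ = v univ := by rw [sum_marginal_arrivedSet, hnorm, sub_zero]

/-- The IR refinement preserves efficiency and yields individual rationality for
superadditive valuations: if at each arrival of player `π t` the rule first gives that
player `v {π t}` and then distributes the residual
`v (arrivedSet t) - v (arrivedSet t \ {π t}) - v {π t}` among arrived players as
non-negative amounts `r t ·` summing to that residual, then the residual at each step
is non-negative, each player's final cumulative share `v {p} + ∑ t, r t p` is at least
`v {p}`, and the total distributed equals `v univ`. -/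
theorem ir_refinement {n : ℕ}
    (v : Finset (Fin n) → ℝ) (π : Equiv.Perm (Fin n))
    (hnorm : v ∅ = 0)
    (hmono : ∀ S T : Finset (Fin n), S ⊆ T → v S ≤ v T)
    (hsuper : ∀ S T : Finset (Fin n), Disjoint S T → v S + v T ≤ v (S ∪ T))
    (r : Fin n → Fin n → ℝ)
    (hrnonneg : ∀ t p, 0 ≤ r t p)
    (hrsupp : ∀ t p, p ∉ arrivedSet π t → r t p = 0)
    (hrsum : ∀ t, ∑ p, r t p =
      v (arrivedSet π t) - v ((arrivedSet π t).erase (π t)) - v {π t}) :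
    (∀ t : Fin n,
      0 ≤ v (arrivedSet π t) - v ((arrivedSet π t).erase (π t)) - v {π t}) ∧
    (∀ p : Fin n, v {p} ≤ v {p} + ∑ t, r t p) ∧
    (∑ p, (v {p} + ∑ t, r t p)) = v Finset.univ :=
  ir_refinement_general v π hnorm hsuper r hrnonneg hrsum
end
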